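/- arXiv:2403.18571 — 2 statements merged into one kernel-verified Lean document; each statement's English description precedes it below -/
import Mathlib

section
/- Dissipation implies stability: if X ≻ 0 and for all ξ, w with w in the sector (i.e., -2wᵀw + 2γ²ξᵀξ ≥ 0) the strict decrease ξ₊ᵀ X ξ₊ - ξᵀ X ξ < 0 holds for ξ₊ = Aξ + B w whenever (ξ,w) ≠ 0, then the closed loop ξ(t+1) = A ξ(t) + B Δ_t(ξ(t)) with any functions Δ_t satisfying ‖Δ_t(ξ)‖ ≤ γ‖ξ‖ converges to zero (indeed V(ξ(t)) = ξ(t)ᵀXξ(t) is strictly decreasing along nonzero trajectories). -/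
open Matrix Filter Topology

/-!
Strict dissipation on the sector, which is a closed cone, upgrades to a uniform decrease
`V (A ξ + B w) + c ‖ξ‖² ≤ V ξ` with `c > 0`: both sides are homogeneous of degree two, so it
suffices to compare them on the unit sphere of pairs `(ξ, w)`, which is compact. Along the closed loop `V ≥ 0`,
so the decreases telescope to `∑ c ‖ξ t‖² ≤ V (ξ 0)`, and `ξ t → 0`.
-/

theorem exists_pos_mul_norm_sq_le_of_homogeneous {E : Type*} [NormedAddCommGroup E]
    [NormedSpace ℝ E] [ProperSpace E] {C : Set E} (hC : IsClosed C)
    (hcone : ∀ c : ℝ, 0 < c → ∀ x ∈ C, c • x ∈ C) {h : E → ℝ} (hcont : Continuous h)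
    (hhom : ∀ (c : ℝ) x, h (c • x) = c ^ 2 * h x) (hpos : ∀ x ∈ C, x ≠ 0 → 0 < h x) :
    ∃ m > 0, ∀ x ∈ C, m * ‖x‖ ^ 2 ≤ h x := by
  have hK : IsCompact (C ∩ Metric.sphere 0 1) := (isCompact_sphere 0 1).inter_left hC
  obtain ⟨m, hm, hmin⟩ := hK.exists_forall_le' hcont.continuousOn fun x hx =>
    hpos x hx.1 (ne_zero_of_mem_unit_sphere ⟨x, hx.2⟩)
  refine ⟨m, hm, fun x hx => ?_⟩
  rcases eq_or_ne x 0 with rfl | hx0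
  · simp [(by simpa using hhom 0 0 : h 0 = 0)]
  have hnorm : 0 < ‖x‖ := norm_pos_iff.mpr hx0
  have hunit : ‖x‖⁻¹ • x ∈ C ∩ Metric.sphere 0 1 :=
    ⟨hcone _ (inv_pos.mpr hnorm) x hx, by simp [norm_smul, hnorm.ne']⟩
  calc m * ‖x‖ ^ 2 ≤ h (‖x‖⁻¹ • x) * ‖x‖ ^ 2 := by gcongr; exact hmin _ hunit
    _ = h x := by rw [hhom]; field_simp

theorem summable_of_add_le {v e : ℕ → ℝ} (hv : ∀ t, 0 ≤ v t) (he : ∀ t, 0 ≤ e t)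
    (hdec : ∀ t, v (t + 1) + e t ≤ v t) : Summable e := by
  refine summable_of_sum_range_le (c := v 0) he fun N => ?_
  calc ∑ t ∈ Finset.range N, e t ≤ ∑ t ∈ Finset.range N, (v t - v (t + 1)) :=
        Finset.sum_le_sum fun t _ => by linarith [hdec t]
    _ = v 0 - v N := Finset.sum_range_sub' v N
    _ ≤ v 0 := by linarith [hv N]

theorem tendsto_zero_of_add_mul_norm_sq_le {E : Type*} [SeminormedAddCommGroup E]
    {u : ℕ → E} {v : ℕ → ℝ} {c : ℝ} (hc : 0 < c) (hv : ∀ t, 0 ≤ v t)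
    (hdec : ∀ t, v (t + 1) + c * ‖u t‖ ^ 2 ≤ v t) : Tendsto u atTop (𝓝 0) := by
  have hsq : Tendsto (fun t => c * ‖u t‖ ^ 2) atTop (𝓝 0) :=
    (summable_of_add_le hv (fun t => by positivity) hdec).tendsto_atTop_zero
  have hnorm : Tendsto (fun t => ‖u t‖) atTop (𝓝 0) := by
    have := (hsq.div_const c).sqrt
    simp only [zero_div, Real.sqrt_zero] at this
    refine this.congr fun t => ?_
    rw [mul_div_cancel_left₀ _ hc.ne', Real.sqrt_sq (norm_nonneg _)]
  exact tendsto_zero_iff_norm_tendsto_zero.mpr hnorm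

theorem Matrix.smul_dotProduct_mulVec_smul {ι R : Type*} [Fintype ι] [CommSemiring R]
    (X : Matrix ι ι R) (c : R) (x : ι → R) :
    (c • x) ⬝ᵥ X *ᵥ (c • x) = c ^ 2 * (x ⬝ᵥ X *ᵥ x) := by
  rw [mulVec_smul, smul_dotProduct, dotProduct_smul, smul_eq_mul, smul_eq_mul]; ring

theorem exists_pos_uniform_dissipation {ι κ : Type*} [Fintype ι] [Fintype κ]
    (A : Matrix ι ι ℝ) (B : Matrix ι κ ℝ) (X : Matrix ι ι ℝ) (γ : ℝ)
    (hdiss : ∀ ξ w, (ξ, w) ≠ 0 → w ⬝ᵥ w ≤ γ ^ 2 * (ξ ⬝ᵥ ξ) →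
      (A *ᵥ ξ + B *ᵥ w) ⬝ᵥ X *ᵥ (A *ᵥ ξ + B *ᵥ w) < ξ ⬝ᵥ X *ᵥ ξ) :
    ∃ c > 0, ∀ ξ w, w ⬝ᵥ w ≤ γ ^ 2 * (ξ ⬝ᵥ ξ) →
      (A *ᵥ ξ + B *ᵥ w) ⬝ᵥ X *ᵥ (A *ᵥ ξ + B *ᵥ w) + c * ‖ξ‖ ^ 2 ≤ ξ ⬝ᵥ X *ᵥ ξ := by
  let V : (ι → ℝ) → ℝ := fun x => x ⬝ᵥ X *ᵥ x
  let sector : Set ((ι → ℝ) × (κ → ℝ)) := {p | p.2 ⬝ᵥ p.2 ≤ γ ^ 2 * (p.1 ⬝ᵥ p.1)}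
  have hclosed : IsClosed sector := isClosed_le (by fun_prop) (by fun_prop)
  have hcone : ∀ c : ℝ, 0 < c → ∀ p ∈ sector, c • p ∈ sector := fun c _ p hp => by
    simp only [sector, Set.mem_ofPred_eq, Prod.smul_fst, Prod.smul_snd, smul_dotProduct,
      dotProduct_smul, smul_eq_mul] at hp ⊢
    nlinarith [mul_self_nonneg c]
  obtain ⟨c, hc, hle⟩ := exists_pos_mul_norm_sq_le_of_homogeneous hclosed hcone
    (h := fun p => V p.1 - V (A *ᵥ p.1 + B *ᵥ p.2)) (by fun_prop)
    (fun c p => by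
      simp only [V, Prod.smul_fst, Prod.smul_snd, mulVec_smul, ← smul_add,
        smul_dotProduct_mulVec_smul]
      ring)
    (fun p hp hp0 => sub_pos.mpr (hdiss p.1 p.2 hp0 hp))
  refine ⟨c, hc, fun ξ w hw => ?_⟩
  have hnorm : ‖ξ‖ ≤ ‖(ξ, w)‖ := norm_fst_le (ξ, w)
  have hdrop : c * ‖(ξ, w)‖ ^ 2 ≤ ξ ⬝ᵥ X *ᵥ ξ - (A *ᵥ ξ + B *ᵥ w) ⬝ᵥ X *ᵥ (A *ᵥ ξ + B *ᵥ w) :=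
    hle (ξ, w) hw
  have : c * ‖ξ‖ ^ 2 ≤ c * ‖(ξ, w)‖ ^ 2 := by gcongr
  linarith

theorem stmt12_general {n : ℕ} (A B : Matrix (Fin n) (Fin n) ℝ) (γ : ℝ)
    (X : Matrix (Fin n) (Fin n) ℝ) (hX : X.PosDef)
    (hdiss : ∀ ξv wv : Fin n → ℝ, ¬ (ξv = 0 ∧ wv = 0) →
      -2 * (wv ⬝ᵥ wv) + 2 * γ ^ 2 * (ξv ⬝ᵥ ξv) ≥ 0 →
      (A.mulVec ξv + B.mulVec wv) ⬝ᵥ X.mulVec (A.mulVec ξv + B.mulVec wv)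
        - ξv ⬝ᵥ X.mulVec ξv < 0)
    (Δ : ℕ → (Fin n → ℝ) → (Fin n → ℝ))
    (hΔ : ∀ t ξv, (Δ t ξv) ⬝ᵥ (Δ t ξv) ≤ γ ^ 2 * (ξv ⬝ᵥ ξv))
    (ξ : ℕ → Fin n → ℝ)
    (hdyn : ∀ t, ξ (t + 1) = A.mulVec (ξ t) + B.mulVec (Δ t (ξ t))) :
    Tendsto ξ atTop (nhds 0) ∧
      ∀ t, ξ t ≠ 0 →
        (ξ (t + 1)) ⬝ᵥ X.mulVec (ξ (t + 1)) < (ξ t) ⬝ᵥ X.mulVec (ξ t) := by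
  obtain ⟨c, hc, hdecay⟩ := exists_pos_uniform_dissipation A B X γ fun ξv wv hne hw => by
    have := hdiss ξv wv (by simpa [Prod.ext_iff] using hne) (by linarith)
    linarith
  have hstep : ∀ t, ξ (t + 1) ⬝ᵥ X *ᵥ ξ (t + 1) + c * ‖ξ t‖ ^ 2 ≤ ξ t ⬝ᵥ X *ᵥ ξ t :=
    fun t => hdyn t ▸ hdecay (ξ t) (Δ t (ξ t)) (hΔ t (ξ t))
  have hV : ∀ t, 0 ≤ ξ t ⬝ᵥ X *ᵥ ξ t := fun t => by
    simpa using hX.posSemidef.dotProduct_mulVec_nonneg (ξ t)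
  refine ⟨tendsto_zero_of_add_mul_norm_sq_le hc hV hstep, fun t ht => ?_⟩
  have : 0 < c * ‖ξ t‖ ^ 2 := by positivity
  linarith [hstep t]

theorem stmt12 {n : ℕ} (A B : Matrix (Fin n) (Fin n) ℝ) (γ : ℝ) (hγ : 0 ≤ γ)
    (X : Matrix (Fin n) (Fin n) ℝ) (hX : X.PosDef)
    (hdiss : ∀ ξv wv : Fin n → ℝ, ¬ (ξv = 0 ∧ wv = 0) →
      -2 * (wv ⬝ᵥ wv) + 2 * γ ^ 2 * (ξv ⬝ᵥ ξv) ≥ 0 →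
      (A.mulVec ξv + B.mulVec wv) ⬝ᵥ X.mulVec (A.mulVec ξv + B.mulVec wv)
        - ξv ⬝ᵥ X.mulVec ξv < 0)
    (Δ : ℕ → (Fin n → ℝ) → (Fin n → ℝ))
    (hΔ : ∀ t ξv, (Δ t ξv) ⬝ᵥ (Δ t ξv) ≤ γ ^ 2 * (ξv ⬝ᵥ ξv))
    (ξ : ℕ → Fin n → ℝ)
    (hdyn : ∀ t, ξ (t + 1) = A.mulVec (ξ t) + B.mulVec (Δ t (ξ t))) :
    Tendsto ξ atTop (nhds 0) ∧
      ∀ t, ξ t ≠ 0 →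
        (ξ (t + 1)) ⬝ᵥ X.mulVec (ξ (t + 1)) < (ξ t) ⬝ᵥ X.mulVec (ξ t) :=
  stmt12_general A B γ X hX hdiss Δ hΔ ξ hdyn
end

section
/- If the matrix inequality AᵀXA - X + τ(2γ² I) + 2τ·(AᵀXB terms) holds in the sense that M := [[AᵀXA - X + 2τγ²I, AᵀXB],[BᵀXA, BᵀXB - 2τI]] ≺ 0 for some X ≻ 0 and τ > 0, then for all ξ ≠ 0 and all w with ‖w‖ ≤ γ‖ξ‖, (Aξ + Bw)ᵀX(Aξ + Bw) < ξᵀXξ. -/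
/-! At `z = (ξ, w)` the quadratic form of the block matrix `M` equals
`(Aξ + Bw)ᵀX(Aξ + Bw) - ξᵀXξ + 2τ(γ²‖ξ‖² - ‖w‖²)`. Since `M ≺ 0` and `z ≠ 0` this is negative,
while the multiplier term is nonnegative under `‖w‖ ≤ γ‖ξ‖`; hence `X`-energy strictly decreases. -/

open Matrix

theorem sumElim_dotProduct_fromBlocks_mulVec_sumElim {l m R : Type*} [Fintype l] [Fintype m]
    [NonUnitalNonAssocSemiring R] (P : Matrix l l R) (Q : Matrix l m R) (S : Matrix m l R)
    (T : Matrix m m R) (x : l → R) (y : m → R) :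
    Sum.elim x y ⬝ᵥ fromBlocks P Q S T *ᵥ Sum.elim x y =
      x ⬝ᵥ P *ᵥ x + x ⬝ᵥ Q *ᵥ y + y ⬝ᵥ S *ᵥ x + y ⬝ᵥ T *ᵥ y := by
  simp only [fromBlocks_mulVec, Sum.elim_comp_inl, Sum.elim_comp_inr, sumElim_dotProduct_sumElim,
    dotProduct_add, add_assoc]

theorem sumElim_dotProduct_fromBlocks_sProcedure_mulVec {l m n R : Type*}
    [Fintype l] [Fintype m] [Fintype n] [DecidableEq l] [DecidableEq m] [CommRing R]
    (A : Matrix n l R) (B : Matrix n m R) (X : Matrix n n R) (Y : Matrix l l R) (c d : R)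
    (x : l → R) (y : m → R) :
    Sum.elim x y ⬝ᵥ fromBlocks (Aᵀ * X * A - Y + c • 1) (Aᵀ * X * B) (Bᵀ * X * A)
        (Bᵀ * X * B - d • 1) *ᵥ Sum.elim x y =
      (A *ᵥ x + B *ᵥ y) ⬝ᵥ X *ᵥ (A *ᵥ x + B *ᵥ y) - x ⬝ᵥ Y *ᵥ x + c * (x ⬝ᵥ x) - d * (y ⬝ᵥ y) := by
  simp only [sumElim_dotProduct_fromBlocks_mulVec_sumElim, add_mulVec, sub_mulVec, smul_mulVec,
    one_mulVec, ← mulVec_mulVec, dotProduct_mulVec _ Aᵀ, dotProduct_mulVec _ Bᵀ, vecMul_transpose,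
    mulVec_add, dotProduct_add, add_dotProduct, dotProduct_sub, dotProduct_smul, smul_eq_mul]
  ring

theorem stmt13_general {n : ℕ} (A B : Matrix (Fin n) (Fin n) ℝ) (γ τ : ℝ)
    (hτ : 0 < τ)
    (X : Matrix (Fin n) (Fin n) ℝ)
    (hM : (-(Matrix.fromBlocks
        (Aᵀ * X * A - X + (2 * τ * γ ^ 2) • (1 : Matrix (Fin n) (Fin n) ℝ))
        (Aᵀ * X * B) (Bᵀ * X * A)
        (Bᵀ * X * B - (2 * τ) • (1 : Matrix (Fin n) (Fin n) ℝ)))).PosDef) :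
    ∀ ξv wv : Fin n → ℝ, ξv ≠ 0 → wv ⬝ᵥ wv ≤ γ ^ 2 * (ξv ⬝ᵥ ξv) →
      (A.mulVec ξv + B.mulVec wv) ⬝ᵥ X.mulVec (A.mulVec ξv + B.mulVec wv)
        < ξv ⬝ᵥ X.mulVec ξv := by
  intro ξv wv hξ hw
  have hz : Sum.elim ξv wv ≠ 0 := fun h => hξ (funext fun i => congrFun h (Sum.inl i))
  have hneg := hM.dotProduct_mulVec_pos hz
  rw [star_trivial, neg_mulVec, dotProduct_neg,
    sumElim_dotProduct_fromBlocks_sProcedure_mulVec] at hneg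
  have hsector : 0 ≤ 2 * τ * (γ ^ 2 * (ξv ⬝ᵥ ξv) - wv ⬝ᵥ wv) :=
    mul_nonneg (by positivity) (sub_nonneg.2 hw)
  linarith

theorem stmt13 {n : ℕ} (A B : Matrix (Fin n) (Fin n) ℝ) (γ τ : ℝ)
    (hγ : 0 ≤ γ) (hτ : 0 < τ)
    (X : Matrix (Fin n) (Fin n) ℝ) (hX : X.PosDef)
    (hM : (-(Matrix.fromBlocks
        (Aᵀ * X * A - X + (2 * τ * γ ^ 2) • (1 : Matrix (Fin n) (Fin n) ℝ))
        (Aᵀ * X * B) (Bᵀ * X * A)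
        (Bᵀ * X * B - (2 * τ) • (1 : Matrix (Fin n) (Fin n) ℝ)))).PosDef) :
    ∀ ξv wv : Fin n → ℝ, ξv ≠ 0 → wv ⬝ᵥ wv ≤ γ ^ 2 * (ξv ⬝ᵥ ξv) →
      (A.mulVec ξv + B.mulVec wv) ⬝ᵥ X.mulVec (A.mulVec ξv + B.mulVec wv)
        < ξv ⬝ᵥ X.mulVec ξv :=
  stmt13_general A B γ τ hτ X hM
end
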